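/- For every shape parameter λ > 0, the tail of the skew normal distribution satisfies (1 - F_λ(x)) · x · exp(x²/2) → (2/π)^{1/2} as x → ∞; equivalently, 1 - F_λ(x) is asymptotically equal to 2φ(x)/x as x → ∞. -/

import Mathlib

open Real MeasureTheory Filter Topology

/-- Standard normal density. -/
noncomputable def stdPhi (x : ℝ) : ℝ := (Real.sqrt (2 * Real.pi))⁻¹ * Real.exp (-(x ^ 2) / 2)

/-- Standard normal cdf. -/
noncomputable def stdCdf (x : ℝ) : ℝ := ∫ t in Set.Iic x, stdPhi t

/-- Skew normal density with shape parameter l. -/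
noncomputable def snPdf (l x : ℝ) : ℝ := 2 * stdPhi x * stdCdf (l * x)

/-- Skew normal cdf with shape parameter l. -/
noncomputable def snCdf (l x : ℝ) : ℝ := ∫ t in Set.Iic x, snPdf l t

/-- Gumbel extreme value distribution function. -/
noncomputable def gumbel (x : ℝ) : ℝ := Real.exp (-Real.exp (-x))

/-!
For `t ≥ x` and `λ ≥ 0` the density `2φ(t)Φ(λt)` lies between `2Φ(λx)φ(t)` and `2φ(t)`, so the tail
`1 - F_λ(x)` is squeezed between `2Φ(λx)Q(x)` and `2Q(x)`, where `Q(x) = ∫_x^∞ φ`. As `Φ(λx) → 1`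
when `λ > 0`, everything reduces to Mills' ratio `Q(x) ~ φ(x)/x`, which follows from
`Q(x) ≤ φ(x)/x ≤ (1 + x⁻²) Q(x)`: integrate `tφ(t) = (-φ)'(t)` and `(1 + t⁻²)φ(t) = (-φ(t)/t)'`
over `(x, ∞)` and compare the integrands with `φ(t)`.
-/

open Set ProbabilityTheory

lemma stdPhi_eq_gaussianPDFReal : stdPhi = gaussianPDFReal 0 1 := by
  ext x; simp [stdPhi, gaussianPDFReal]

lemma stdPhi_pos (x : ℝ) : 0 < stdPhi x :=
  stdPhi_eq_gaussianPDFReal ▸ gaussianPDFReal_pos 0 1 x one_ne_zero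

lemma integrable_stdPhi : Integrable stdPhi :=
  stdPhi_eq_gaussianPDFReal ▸ integrable_gaussianPDFReal 0 1

lemma integral_stdPhi : ∫ x, stdPhi x = 1 :=
  stdPhi_eq_gaussianPDFReal ▸ integral_gaussianPDFReal_eq_one 0 one_ne_zero

lemma stdPhi_neg (x : ℝ) : stdPhi (-x) = stdPhi x := by simp [stdPhi]

lemma hasDerivAt_stdPhi (x : ℝ) : HasDerivAt stdPhi (-x * stdPhi x) x := by
  have h : HasDerivAt (fun t : ℝ => -t ^ 2 / 2) (-x) x :=
    ((hasDerivAt_pow 2 x).fun_neg.div_const 2).congr_deriv (by ring)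
  exact (h.exp.const_mul (√(2 * π))⁻¹).congr_deriv (by rw [stdPhi]; ring)

lemma tendsto_stdPhi_atTop : Tendsto stdPhi atTop (𝓝 0) := by
  have h : Tendsto (fun x : ℝ => -x ^ 2 / 2) atTop atBot :=
    (tendsto_neg_atTop_atBot.comp (tendsto_pow_atTop two_ne_zero)).atBot_div_const two_pos
  have := (tendsto_exp_atBot.comp h).const_mul (√(2 * π))⁻¹
  rwa [mul_zero] at this

lemma stdPhi_mul_exp (x : ℝ) : stdPhi x * exp (x ^ 2 / 2) = (√(2 * π))⁻¹ := by
  rw [stdPhi, mul_assoc, ← exp_add, neg_div, neg_add_cancel, exp_zero, mul_one]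

lemma stdCdf_eq_cdf : stdCdf = cdf (gaussianReal 0 1) := by
  ext x
  rw [cdf_eq_real, measureReal_def, gaussianReal_apply_eq_integral 0 one_ne_zero,
    ENNReal.toReal_ofReal
      (setIntegral_nonneg measurableSet_Iic fun t _ => gaussianPDFReal_nonneg 0 1 t),
    stdCdf, stdPhi_eq_gaussianPDFReal]

lemma stdCdf_add_stdCdf_neg (x : ℝ) : stdCdf x + stdCdf (-x) = 1 := by
  have h : stdCdf (-x) = ∫ t in Ioi x, stdPhi t := by
    rw [stdCdf, ← integral_comp_neg_Ioi]
    simp only [stdPhi_neg]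
  rw [h, stdCdf, intervalIntegral.integral_Iic_add_Ioi integrable_stdPhi.integrableOn
    integrable_stdPhi.integrableOn, integral_stdPhi]

lemma monotone_stdCdf : Monotone stdCdf := stdCdf_eq_cdf ▸ monotone_cdf _

lemma stdCdf_nonneg (x : ℝ) : 0 ≤ stdCdf x := stdCdf_eq_cdf ▸ cdf_nonneg _ x

lemma stdCdf_le_one (x : ℝ) : stdCdf x ≤ 1 := stdCdf_eq_cdf ▸ cdf_le_one _ x

lemma tendsto_stdCdf_atTop : Tendsto stdCdf atTop (𝓝 1) := stdCdf_eq_cdf ▸ tendsto_cdf_atTop _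

section MillsRatio

variable {x : ℝ}

lemma hasDerivAt_neg_stdPhi_div {t : ℝ} (ht : t ≠ 0) :
    HasDerivAt (fun s => -stdPhi s / s) ((1 + (t ^ 2)⁻¹) * stdPhi t) t :=
  ((hasDerivAt_stdPhi t).fun_neg.div (hasDerivAt_id' t) ht).congr_deriv (by field_simp; ring)

lemma tendsto_neg_stdPhi_div_atTop : Tendsto (fun s => -stdPhi s / s) atTop (𝓝 0) := by
  simpa [neg_div, div_eq_mul_inv] using tendsto_stdPhi_atTop.neg.mul tendsto_inv_atTop_zero

lemma integrableOn_mul_stdPhi_and_setIntegral_Ioi (hx : 0 ≤ x) :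
    IntegrableOn (fun t => t * stdPhi t) (Ioi x) ∧ ∫ t in Ioi x, t * stdPhi t = stdPhi x := by
  have hderiv (t : ℝ) (_ : t ∈ Ici x) : HasDerivAt (fun s => -stdPhi s) (t * stdPhi t) t :=
    (hasDerivAt_stdPhi t).neg.congr_deriv (by ring)
  have hpos (t : ℝ) (ht : t ∈ Ioi x) : 0 ≤ t * stdPhi t :=
    mul_nonneg (hx.trans ht.out.le) (stdPhi_pos t).le
  have hlim : Tendsto (fun s => -stdPhi s) atTop (𝓝 0) := by
    simpa using tendsto_stdPhi_atTop.neg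
  refine ⟨integrableOn_Ioi_deriv_of_nonneg' hderiv hpos hlim, ?_⟩
  rw [integral_Ioi_of_hasDerivAt_of_nonneg' hderiv hpos hlim]; ring

lemma integrableOn_one_add_inv_sq_mul_stdPhi_and_setIntegral_Ioi (hx : 0 < x) :
    IntegrableOn (fun t => (1 + (t ^ 2)⁻¹) * stdPhi t) (Ioi x) ∧
      ∫ t in Ioi x, (1 + (t ^ 2)⁻¹) * stdPhi t = stdPhi x / x := by
  have hderiv (t : ℝ) (ht : t ∈ Ici x) :
      HasDerivAt (fun s => -stdPhi s / s) ((1 + (t ^ 2)⁻¹) * stdPhi t) t :=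
    hasDerivAt_neg_stdPhi_div (hx.trans_le ht).ne'
  have hpos (t : ℝ) (_ : t ∈ Ioi x) : 0 ≤ (1 + (t ^ 2)⁻¹) * stdPhi t := by
    have := (stdPhi_pos t).le; positivity
  refine ⟨integrableOn_Ioi_deriv_of_nonneg' hderiv hpos tendsto_neg_stdPhi_div_atTop, ?_⟩
  rw [integral_Ioi_of_hasDerivAt_of_nonneg' hderiv hpos tendsto_neg_stdPhi_div_atTop]; ring

lemma setIntegral_Ioi_stdPhi_le (hx : 0 < x) : ∫ t in Ioi x, stdPhi t ≤ stdPhi x / x := by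
  obtain ⟨hint, heq⟩ := integrableOn_mul_stdPhi_and_setIntegral_Ioi hx.le
  rw [le_div_iff₀ hx, ← heq, mul_comm, ← integral_const_mul]
  refine setIntegral_mono_on (integrable_stdPhi.integrableOn.const_mul x) hint measurableSet_Ioi
    fun t ht => mul_le_mul_of_nonneg_right ht.out.le (stdPhi_pos t).le

lemma stdPhi_div_le_setIntegral_Ioi (hx : 0 < x) :
    stdPhi x / x ≤ (1 + (x ^ 2)⁻¹) * ∫ t in Ioi x, stdPhi t := by
  obtain ⟨hint, heq⟩ := integrableOn_one_add_inv_sq_mul_stdPhi_and_setIntegral_Ioi hx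
  rw [← heq, ← integral_const_mul]
  refine setIntegral_mono_on hint (integrable_stdPhi.integrableOn.const_mul _) measurableSet_Ioi
    fun t ht => mul_le_mul_of_nonneg_right ?_ (stdPhi_pos t).le
  gcongr
  exact ht.out.le

lemma tendsto_setIntegral_Ioi_stdPhi_mul_div :
    Tendsto (fun x => (∫ t in Ioi x, stdPhi t) * x / stdPhi x) atTop (𝓝 1) := by
  have hlow : Tendsto (fun x : ℝ => (1 + (x ^ 2)⁻¹)⁻¹) atTop (𝓝 1) := by
    simpa using ((tendsto_inv_atTop_zero.comp
      (tendsto_pow_atTop (α := ℝ) two_ne_zero)).const_add 1).inv₀ (by norm_num)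
  refine tendsto_of_tendsto_of_tendsto_of_le_of_le' hlow tendsto_const_nhds ?_ ?_
  all_goals filter_upwards [eventually_gt_atTop 0] with x hx
  · have h := stdPhi_div_le_setIntegral_Ioi hx
    rw [div_le_iff₀ hx] at h
    rw [inv_le_iff_one_le_mul₀ (by positivity), div_mul_eq_mul_div, le_div_iff₀ (stdPhi_pos x)]
    linarith
  · rw [div_le_one (stdPhi_pos x), ← le_div_iff₀ hx]
    exact setIntegral_Ioi_stdPhi_le hx

end MillsRatio

section SkewNormal

variable {l : ℝ}

lemma snPdf_nonneg (l x : ℝ) : 0 ≤ snPdf l x := by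
  have := stdPhi_pos x
  have := stdCdf_nonneg (l * x)
  unfold snPdf; positivity

lemma snPdf_le (l x : ℝ) : snPdf l x ≤ 2 * stdPhi x :=
  mul_le_of_le_one_right (by linarith [stdPhi_pos x]) (stdCdf_le_one _)

lemma snPdf_add_snPdf_neg (l x : ℝ) : snPdf l x + snPdf l (-x) = 2 * stdPhi x := by
  rw [snPdf, snPdf, stdPhi_neg, mul_neg, ← mul_add, stdCdf_add_stdCdf_neg, mul_one]

lemma integrable_snPdf (l : ℝ) : Integrable (snPdf l) := by
  have hmeas : Measurable (snPdf l) :=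
    (measurable_const.mul (stdPhi_eq_gaussianPDFReal ▸ measurable_gaussianPDFReal 0 1)).mul
      (monotone_stdCdf.measurable.comp (measurable_const_mul l))
  refine (integrable_stdPhi.const_mul 2).mono' hmeas.aestronglyMeasurable (ae_of_all _ fun x => ?_)
  rw [Real.norm_of_nonneg (snPdf_nonneg l x)]
  exact snPdf_le l x

lemma integral_snPdf (l : ℝ) : ∫ x, snPdf l x = 1 := by
  have h : ∫ x, (snPdf l x + snPdf l (-x)) = 2 := by
    simp only [snPdf_add_snPdf_neg, integral_const_mul, integral_stdPhi, mul_one]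
  rw [integral_add (integrable_snPdf l) (integrable_snPdf l).comp_neg, integral_neg_eq_self] at h
  linarith

lemma one_sub_snCdf (l x : ℝ) : 1 - snCdf l x = ∫ t in Ioi x, snPdf l t := by
  rw [← integral_snPdf l, snCdf, ← intervalIntegral.integral_Iic_add_Ioi
    (integrable_snPdf l).integrableOn (integrable_snPdf l).integrableOn, add_sub_cancel_left]

lemma setIntegral_Ioi_snPdf_le (l x : ℝ) :
    ∫ t in Ioi x, snPdf l t ≤ 2 * ∫ t in Ioi x, stdPhi t := by
  rw [← integral_const_mul]
  exact setIntegral_mono (integrable_snPdf l).integrableOn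
    (integrable_stdPhi.const_mul 2).integrableOn (snPdf_le l)

lemma le_setIntegral_Ioi_snPdf (hl : 0 ≤ l) (x : ℝ) :
    2 * stdCdf (l * x) * ∫ t in Ioi x, stdPhi t ≤ ∫ t in Ioi x, snPdf l t := by
  rw [← integral_const_mul]
  refine setIntegral_mono_on (integrable_stdPhi.const_mul _).integrableOn
    (integrable_snPdf l).integrableOn measurableSet_Ioi fun t ht => ?_
  rw [snPdf, mul_right_comm]
  exact mul_le_mul_of_nonneg_left (monotone_stdCdf (mul_le_mul_of_nonneg_left ht.out.le hl))
    (by linarith [stdPhi_pos t])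

lemma tendsto_one_sub_snCdf_mul_div (hl : 0 < l) :
    Tendsto (fun x => (1 - snCdf l x) * x / stdPhi x) atTop (𝓝 2) := by
  have hcdf : Tendsto (fun x => stdCdf (l * x)) atTop (𝓝 1) :=
    tendsto_stdCdf_atTop.comp (tendsto_id.const_mul_atTop hl)
  have hlow := (hcdf.const_mul 2).mul tendsto_setIntegral_Ioi_stdPhi_mul_div
  have hup := tendsto_setIntegral_Ioi_stdPhi_mul_div.const_mul 2
  rw [mul_one, mul_one] at hlow
  rw [mul_one] at hup
  refine tendsto_of_tendsto_of_tendsto_of_le_of_le' hlow hup ?_ ?_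
  all_goals filter_upwards [eventually_gt_atTop 0] with x hx
  · rw [one_sub_snCdf, ← mul_div_assoc, ← mul_assoc]
    exact div_le_div_of_nonneg_right
      (mul_le_mul_of_nonneg_right (le_setIntegral_Ioi_snPdf hl.le x) hx.le) (stdPhi_pos x).le
  · rw [one_sub_snCdf, ← mul_div_assoc, ← mul_assoc]
    exact div_le_div_of_nonneg_right
      (mul_le_mul_of_nonneg_right (setIntegral_Ioi_snPdf_le l x) hx.le) (stdPhi_pos x).le

end SkewNormal

lemma two_mul_inv_sqrt_two_mul_pi : 2 * (√(2 * π))⁻¹ = √(2 / π) := by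
  rw [sqrt_div zero_le_two, sqrt_mul zero_le_two]
  field_simp
  rw [sq_sqrt zero_le_two]

theorem skew_normal_tail_pos (l : ℝ) (hl : 0 < l) :
    Tendsto (fun x : ℝ => (1 - snCdf l x) * x * Real.exp (x ^ 2 / 2)) atTop
      (𝓝 (Real.sqrt (2 / Real.pi))) := by
  have h := (tendsto_one_sub_snCdf_mul_div hl).mul_const (√(2 * π))⁻¹
  rw [two_mul_inv_sqrt_two_mul_pi] at h
  refine h.congr fun x => ?_
  rw [← stdPhi_mul_exp x]
  field_simp [(stdPhi_pos x).ne']
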